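/- In a linear SEM satisfying Assumption (A strictly lower triangular, Σ positive definite), let S ⊂ V \ {X_i}, and let S_2 = {X_q ∈ S : S \ {X_q} blocks every back-door path from X_q to X_i}. For X_q ∈ S_2 define the residualized variables X̃_q = X_q - Σ_{X_p ∈ S_1} τ_{qp|do(S_1\{X_p})} X_p and X̃_i = X_i - Σ_{X_k ∈ S} τ_{ik|do(S\{X_k})} X_k, where S_1 = S \ S_2. Then Cov(X̃_q, X̃_i) = 0. -/

import Mathlib

open scoped Classical

/-- Orientation of an edge along a path. -/
inductive EdgeDir
  | fwd  -- a → b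
  | bwd  -- a ← b
  | bi   -- a ↔ b
deriving DecidableEq

/-- An acyclic directed mixed graph: directed and bidirected edges on a vertex set. -/
structure ADMG (V : Type) where
  dir : V → V → Prop
  bidir : V → V → Prop

namespace ADMG

variable {V : Type} (G : ADMG V)

/-- `StepOK d a b` : the step from `a` to `b` along a path realizes the edge type `d`. -/
def StepOK : EdgeDir → V → V → Prop
  | .fwd, a, b => G.dir a b
  | .bwd, a, b => G.dir b a
  | .bi,  a, b => G.bidir a b

/-- A path in a mixed graph: a list of distinct vertices together with the orientation of
each consecutive edge. -/
structure GPath where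
  verts : List V
  dirs : List EdgeDir
  hlen : verts.length = dirs.length + 1
  nodup : verts.Nodup
  ok : ∀ k (h : k < dirs.length),
    G.StepOK (dirs.get ⟨k, h⟩) (verts.get ⟨k, by omega⟩) (verts.get ⟨k + 1, by omega⟩)

variable {G}

/-- First vertex of a path. -/
def GPath.first (p : G.GPath) : V := p.verts.get ⟨0, by have := p.hlen; omega⟩

/-- Last vertex of a path. -/
def GPath.last (p : G.GPath) : V :=
  p.verts.get ⟨p.dirs.length, by have := p.hlen; omega⟩

/-- The vertex at position `k` is a collider (both adjacent edges point into it). -/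
def GPath.ColliderAt (p : G.GPath) (k : ℕ) : Prop :=
  ∃ (hk : 0 < k) (h : k < p.dirs.length),
    (p.dirs.get ⟨k - 1, by omega⟩ = .fwd ∨ p.dirs.get ⟨k - 1, by omega⟩ = .bi) ∧
    (p.dirs.get ⟨k, h⟩ = .bwd ∨ p.dirs.get ⟨k, h⟩ = .bi)

/-- `b` is a descendant of `a` (there is a directed path from `a` to `b`). -/
def Desc (G : ADMG V) (a b : V) : Prop := Relation.TransGen G.dir a b

/-- `Z` blocks a path: either `Z` contains an interior non-collider, or some collider on
the path is such that neither it nor any of its descendants belongs to `Z`. -/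
def Blocks (Z : Set V) (p : G.GPath) : Prop :=
  (∃ k, ∃ _hk : 0 < k, ∃ h : k < p.dirs.length,
      ¬ p.ColliderAt k ∧ p.verts.get ⟨k, by have := p.hlen; omega⟩ ∈ Z)
  ∨ (∃ k, ∃ h : k < p.dirs.length, p.ColliderAt k ∧
      p.verts.get ⟨k, by have := p.hlen; omega⟩ ∉ Z ∧
      ∀ d, Desc G (p.verts.get ⟨k, by have := p.hlen; omega⟩) d → d ∉ Z)

/-- The path runs from `a` to `b`. -/
def GPath.IsBetween (p : G.GPath) (a b : V) : Prop := p.first = a ∧ p.last = b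

/-- A directed path from `a` to `b` (all edges oriented forward, nonempty). -/
def GPath.IsDirected (p : G.GPath) (a b : V) : Prop :=
  p.first = a ∧ p.last = b ∧ p.dirs ≠ [] ∧
    ∀ k (h : k < p.dirs.length), p.dirs.get ⟨k, h⟩ = .fwd

/-- A back-door path from `a` to `b` (first edge points into `a` or is bidirected). -/
def GPath.IsBackdoor (p : G.GPath) (a b : V) : Prop :=
  p.first = a ∧ p.last = b ∧ ∃ h : 0 < p.dirs.length,
    (p.dirs.get ⟨0, h⟩ = .bwd ∨ p.dirs.get ⟨0, h⟩ = .bi)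

/-- The path contains a v-structure. -/
def GPath.HasCollider (p : G.GPath) : Prop := ∃ k, p.ColliderAt k

/-- The selective-door criterion relative to `(j, i)`. -/
def SelectiveDoor (G : ADMG V) (Z : Set V) (j i : V) : Prop :=
  (∀ k ∈ Z, Desc G j k →
      (∃ q : G.GPath, q.IsDirected j k ∧ ¬ Blocks ((Z ∪ {j}) \ {k}) q) →
      ∀ p : G.GPath, p.IsBackdoor k i → Blocks (Z \ {k}) p)
  ∧ (∀ p : G.GPath, p.IsBackdoor j i → Blocks Z p)

/-- The back-door criterion relative to `(j, i)`. -/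
def BackdoorCrit (G : ADMG V) (Z : Set V) (j i : V) : Prop :=
  (∀ k ∈ Z, ¬ Desc G j k) ∧ ∀ p : G.GPath, p.IsBackdoor j i → Blocks Z p

end ADMG


open MeasureTheory

/-- The causal path diagram of a linear SEM with coefficient matrix `A` and error
covariance `Sg`: directed edge `a ⟶ b` iff `A b a ≠ 0`, bidirected edge iff the
corresponding error covariance is nonzero. -/
def diagram {N : ℕ} (A Sg : Matrix (Fin N) (Fin N) ℝ) : ADMG (Fin N) where
  dir := fun a b => A b a ≠ 0
  bidir := fun a b => a ≠ b ∧ Sg a b ≠ 0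

/-- The `Z`-controlled total effect of `X j` on `X i`: the `(i,j)` entry of `(I - A_Z)⁻¹`
where `A_Z` deletes all edges whose head lies in `Z`. -/
noncomputable def ctrlEffect {N : ℕ} (A : Matrix (Fin N) (Fin N) ℝ)
    (Z : Set (Fin N)) (i j : Fin N) : ℝ :=
  (1 - Matrix.of fun a b => if a ∈ Z then (0 : ℝ) else A a b)⁻¹ i j


/-!
Replacing the structural equations of `S` by the observed values of `X` on `S` solves the SEM as
`X = (I - A_S)⁻¹ u'`, where `A_S` has the rows of `S` deleted and `u'` equals `X` on `S` and `u`
off `S`. Since `τ_{ik|do(S∖{k})} = τ_{ik|do(S)}`, this gives `X̃_i = ∑_{l ∉ S} τ_{il|do(S)} u_l`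
and `X̃_q = ∑_{l ∉ S₁} τ_{ql|do(S₁)} u_l`, so `Cov(X̃_q, X̃_i)` is a sum of terms
`τ_{ql|do(S₁)} τ_{im|do(S)} Σ_{lm}`.

A nonzero term gives a directed path `l → ⋯ → q` whose vertices after `l` avoid `S₁`, a directed
path `m → ⋯ → i` avoiding `S`, and `l = m` or `l ↔ m`. Let `q'` be the first vertex of the first
path lying in `S₂`; the vertices before it avoid `S`. Walking back from `q'` until the second path
is met (or, failing that, crossing `l ↔ m`) and then following it to `i` gives a collider-free
back-door path from `q'` to `i` whose interior avoids `S`. It is not blocked by `S ∖ {q'}`,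
contradicting `q' ∈ S₂`.
-/

open Relation ProbabilityTheory

namespace Matrix

variable {n R : Type*} [Fintype n] [LinearOrder n] [DecidableEq n] [CommRing R]
  {M M' : Matrix n n R}

theorem isUnit_det_one_sub (hM : ∀ i j, i ≤ j → M i j = 0) : IsUnit (1 - M).det := by
  rw [det_of_isLowerTriangular _ fun i j (hij : i < j) => ?_]
  · simp [hM _ _ le_rfl]
  · simp [one_apply_ne hij.ne, hM _ _ hij.le]

theorem inv_one_sub_eq_one_add_mul (hM : ∀ i j, i ≤ j → M i j = 0) :
    (1 - M)⁻¹ = 1 + M * (1 - M)⁻¹ := by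
  have h := mul_nonsing_inv _ (isUnit_det_one_sub hM)
  rw [sub_mul, one_mul] at h
  exact sub_eq_iff_eq_add.mp h

theorem reflTransGen_of_inv_one_sub_apply_ne_zero (hM : ∀ i j, i ≤ j → M i j = 0)
    {a b : n} (h : (1 - M)⁻¹ a b ≠ 0) : ReflTransGen (fun x y => M y x ≠ 0) b a := by
  induction a using WellFoundedLT.induction with
  | ind a ih =>
    rw [inv_one_sub_eq_one_add_mul hM, add_apply, mul_apply] at h
    by_cases hab : a = b
    · exact hab ▸ ReflTransGen.refl
    rw [one_apply_ne hab, zero_add] at h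
    obtain ⟨c, -, hc⟩ := Finset.exists_ne_zero_of_sum_ne_zero h
    have hac : M a c ≠ 0 := left_ne_zero_of_mul hc
    have hca : c < a := lt_of_not_ge fun h => hac (hM a c h)
    exact (ih c hca (right_ne_zero_of_mul hc)).tail hac

theorem le_of_inv_one_sub_apply_ne_zero (hM : ∀ i j, i ≤ j → M i j = 0) {a b : n}
    (h : (1 - M)⁻¹ a b ≠ 0) : b ≤ a := by
  have hr := reflTransGen_of_inv_one_sub_apply_ne_zero hM h
  clear h
  induction hr with
  | refl => exact le_rfl
  | tail _ hxy ih => exact ih.trans (le_of_not_ge fun h => hxy (hM _ _ h))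

theorem inv_one_sub_apply_eq_of_forall_ne (hM : ∀ i j, i ≤ j → M i j = 0)
    (hM' : ∀ i j, i ≤ j → M' i j = 0) {k : n} (h : ∀ a, a ≠ k → M a = M' a) (i : n) :
    (1 - M)⁻¹ i k = (1 - M')⁻¹ i k := by
  set C := (1 - M')⁻¹
  have hcol : ∀ a, ((M' - M) * C) a k = 0 := by
    intro a
    rw [mul_apply]
    refine Finset.sum_eq_zero fun j _ => ?_
    by_cases hak : a = k
    · subst hak
      by_cases hj : a ≤ j
      · rw [sub_apply, hM' _ _ hj, hM _ _ hj, sub_zero, zero_mul]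
      · have hC : C j a = 0 := by_contra fun hC => hj (le_of_inv_one_sub_apply_ne_zero hM' hC)
        rw [hC, mul_zero]
    · rw [sub_apply, h a hak, sub_self, zero_mul]
  have hkey : ∀ a, ((1 - M) * C) a k = (1 : Matrix n n R) a k := by
    intro a
    rw [show 1 - M = (1 - M') + (M' - M) by abel, add_mul,
      mul_nonsing_inv _ (isUnit_det_one_sub hM'), add_apply, hcol, add_zero]
  calc (1 - M)⁻¹ i k = ((1 - M)⁻¹ * (1 : Matrix n n R)) i k := by rw [Matrix.mul_one]
    _ = ((1 - M)⁻¹ * ((1 - M) * C)) i k := by simp only [mul_apply, hkey]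
    _ = C i k := by
      rw [← Matrix.mul_assoc, nonsing_inv_mul _ (isUnit_det_one_sub hM), Matrix.one_mul]

end Matrix

theorem Relation.ReflTransGen.exists_first_mem {α : Type*} {r : α → α → Prop} {U T : Set α}
    {a b : α} (h : ReflTransGen (fun x y => r x y ∧ y ∉ U) a b) (ha : a ∉ U) (hb : b ∈ T) :
    ∃ t ∈ T, ReflTransGen (fun x y => r x y ∧ x ∉ U ∪ T) a t := by
  induction h using ReflTransGen.head_induction_on with
  | refl => exact ⟨b, hb, .refl⟩
  | @head a c hac _ ih =>
    obtain ⟨t, ht, hct⟩ := ih hac.2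
    by_cases haT : a ∈ T
    · exact ⟨a, haT, .refl⟩
    · exact ⟨t, ht, .head ⟨hac.1, fun h => h.elim ha haT⟩ hct⟩

/-- The common vertex of consecutive edges `d`, `e` of a path is not a collider. -/
def EdgeDir.NonCollider (d e : EdgeDir) : Prop := d = .bwd ∨ e = .fwd

theorem EdgeDir.isChain_nonCollider_of_forall_eq_fwd {ds : List EdgeDir}
    (h : ∀ d ∈ ds, d = .fwd) : ds.IsChain EdgeDir.NonCollider :=
  List.isChain_iff_getElem.mpr fun _ _ => .inr (h _ (List.getElem_mem _))

namespace ADMG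

variable {V : Type} {G : ADMG V}

namespace GPath

def nil (v : V) : G.GPath where
  verts := [v]
  dirs := []
  hlen := rfl
  nodup := List.nodup_singleton v
  ok k h := absurd h (Nat.not_lt_zero k)

def cons (a : V) (d : EdgeDir) (p : G.GPath) (hd : G.StepOK d a p.first) (ha : a ∉ p.verts) :
    G.GPath where
  verts := a :: p.verts
  dirs := d :: p.dirs
  hlen := by simp [p.hlen]
  nodup := List.nodup_cons.mpr ⟨ha, p.nodup⟩
  ok
    | 0, _ => hd
    | k + 1, h => p.ok k (Nat.lt_of_succ_lt_succ h)

@[simp] theorem nil_verts (v : V) : (nil v : G.GPath).verts = [v] := rfl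
@[simp] theorem nil_dirs (v : V) : (nil v : G.GPath).dirs = [] := rfl

section cons

variable {a : V} {d : EdgeDir} {p : G.GPath} {hd : G.StepOK d a p.first} {ha : a ∉ p.verts}

@[simp] theorem cons_verts : (cons a d p hd ha).verts = a :: p.verts := rfl
@[simp] theorem cons_dirs : (cons a d p hd ha).dirs = d :: p.dirs := rfl

end cons

theorem first_cons_tail (p : G.GPath) : p.first :: p.verts.tail = p.verts := by
  obtain ⟨_ | ⟨v, vs⟩, dirs, hlen, -, -⟩ := p
  · simp at hlen
  · rfl

theorem isBackdoor_cons {a i : V} {d : EdgeDir} (hd' : d = .bwd ∨ d = .bi) {p : G.GPath}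
    {hd : G.StepOK d a p.first} {ha : a ∉ p.verts} (hp : p.last = i) :
    (cons a d p hd ha).IsBackdoor a i :=
  ⟨rfl, hp, Nat.succ_pos _, hd'⟩

theorem not_colliderAt (p : G.GPath) (hp : p.dirs.IsChain EdgeDir.NonCollider) (k : ℕ) :
    ¬ p.ColliderAt k := by
  rintro ⟨hk0, hk, hin, hout⟩
  obtain ⟨j, rfl⟩ : ∃ j, k = j + 1 := ⟨k - 1, by omega⟩
  simp only [List.get_eq_getElem, Nat.add_sub_cancel] at hin hout
  rcases hp.getElem j hk with h | h <;> simp [h] at hin hout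

end GPath

theorem not_blocks_of_isChain {Z : Set V} (p : G.GPath)
    (hp : p.dirs.IsChain EdgeDir.NonCollider) (hZ : ∀ v ∈ p.verts.tail, v ∉ Z) :
    ¬ Blocks Z p := by
  rintro (⟨k, hk0, hk, -, hkZ⟩ | ⟨k, -, hcol, -⟩)
  · obtain ⟨j, rfl⟩ : ∃ j, k = j + 1 := ⟨k - 1, by omega⟩
    refine hZ _ ?_ hkZ
    have hj : j < p.verts.tail.length := by simp [p.hlen]; omega
    simpa using List.getElem_mem hj
  · exact p.not_colliderAt hp k hcol

def DirPathAvoiding (G : ADMG V) (S : Set V) (v i : V) : Prop :=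
  v ∉ S ∧ ReflTransGen (fun a b => G.dir a b ∧ b ∉ S) v i

variable [Preorder V]

theorem exists_directed_gpath (hG : ∀ a b, G.dir a b → a < b) {S : Set V} {y i : V}
    (hy : DirPathAvoiding G S y i) :
    ∃ p : G.GPath, p.first = y ∧ p.last = i ∧ (∀ d ∈ p.dirs, d = .fwd) ∧
      ∀ v ∈ p.verts, y ≤ v ∧ DirPathAvoiding G S v i := by
  obtain ⟨hyS, hyi⟩ := hy
  induction hyi using ReflTransGen.head_induction_on with
  | refl => exact ⟨.nil i, rfl, rfl, by simp, by simpa using ⟨hyS, .refl⟩⟩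
  | @head y z hyz hzi ih =>
    obtain ⟨p, hpz, hpi, hpd, hpv⟩ := ih hyz.2
    have hy : y ∉ p.verts := fun hy => (hG y z hyz.1).not_ge (hpv y hy).1
    refine ⟨.cons y .fwd p (hpz ▸ hyz.1) hy, rfl, hpi, by simpa using hpd, ?_⟩
    simp only [GPath.cons_verts, List.mem_cons, forall_eq_or_imp]
    exact ⟨⟨le_rfl, hyS, .head hyz hzi⟩,
      fun v hv => ⟨(hG y z hyz.1).le.trans (hpv v hv).1, (hpv v hv).2⟩⟩

/-- The last conjunct keeps the path simple when a vertex above `x` is prepended. -/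
theorem exists_backdoor_gpath (hG : ∀ a b, G.dir a b → a < b) {S : Set V} {l m x i : V}
    (hm : DirPathAvoiding G S m i) (hlm : l = m ∨ G.bidir l m)
    (hlx : ReflTransGen (fun a b => G.dir a b ∧ a ∉ S) l x) (hx : ¬ DirPathAvoiding G S x i) :
    ∃ p : G.GPath, p.IsBackdoor x i ∧ p.dirs.IsChain EdgeDir.NonCollider ∧
      (∀ v ∈ p.verts.tail, v ∉ S) ∧ ∀ v ∈ p.verts, v ≤ x ∨ DirPathAvoiding G S v i := by
  induction hlx with
  | refl =>
    obtain ⟨p, hpm, hpi, hpd, hpv⟩ := exists_directed_gpath hG hm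
    have hlm : G.bidir l m := hlm.resolve_left (by rintro rfl; exact hx hm)
    have hl : l ∉ p.verts := fun hl => hx (hpv l hl).2
    refine ⟨.cons l .bi p (hpm ▸ hlm) hl, GPath.isBackdoor_cons (.inr rfl) hpi, ?_,
      fun v hv => (hpv v hv).2.1, ?_⟩
    · simp only [GPath.cons_dirs, List.isChain_cons]
      exact ⟨fun d hd => .inr (hpd d (List.mem_of_mem_head? hd)),
        EdgeDir.isChain_nonCollider_of_forall_eq_fwd hpd⟩
    · simp only [GPath.cons_verts, List.mem_cons, forall_eq_or_imp]
      exact ⟨.inl le_rfl, fun v hv => .inr (hpv v hv).2⟩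
  | @tail y x _ hyx ih =>
    obtain ⟨p, hpy, hpi, hpd, hpS, hpv⟩ : ∃ p : G.GPath, p.first = y ∧ p.last = i ∧
        p.dirs.IsChain EdgeDir.NonCollider ∧ (∀ v ∈ p.verts, v ∉ S) ∧
        ∀ v ∈ p.verts, v ≤ y ∨ DirPathAvoiding G S v i := by
      by_cases hy : DirPathAvoiding G S y i
      · obtain ⟨p, hpy, hpi, hpd, hpv⟩ := exists_directed_gpath hG hy
        exact ⟨p, hpy, hpi, EdgeDir.isChain_nonCollider_of_forall_eq_fwd hpd,
          fun v hv => (hpv v hv).2.1, fun v hv => .inr (hpv v hv).2⟩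
      · obtain ⟨p, ⟨hpy, hpi, -⟩, hpd, hpS, hpv⟩ := ih hy
        refine ⟨p, hpy, hpi, hpd, ?_, hpv⟩
        rw [← p.first_cons_tail, hpy]
        simpa [hyx.2] using hpS
    have hx' : x ∉ p.verts := fun hxp => (hpv x hxp).elim (hG y x hyx.1).not_ge hx
    refine ⟨.cons x .bwd p (hpy ▸ hyx.1) hx', GPath.isBackdoor_cons (.inl rfl) hpi, ?_, hpS, ?_⟩
    · simp only [GPath.cons_dirs, List.isChain_cons]
      exact ⟨fun _ _ => .inl rfl, hpd⟩
    · simp only [GPath.cons_verts, List.mem_cons, forall_eq_or_imp]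
      exact ⟨.inl le_rfl, fun v hv => (hpv v hv).imp_left fun h => h.trans (hG y x hyx.1).le⟩

theorem exists_isBackdoor_not_blocks (hG : ∀ a b, G.dir a b → a < b) {S : Set V}
    {l m q i : V} (hq : q ∈ S) (hm : DirPathAvoiding G S m i) (hlm : l = m ∨ G.bidir l m)
    (hlq : ReflTransGen (fun a b => G.dir a b ∧ a ∉ S) l q) :
    ∃ p : G.GPath, p.IsBackdoor q i ∧ ¬ Blocks (S \ {q}) p := by
  obtain ⟨p, hp, hpd, hpS, -⟩ := exists_backdoor_gpath hG hm hlm hlq fun h => h.1 hq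
  exact ⟨p, hp, not_blocks_of_isChain p hpd fun v hv hvS => hpS v hv hvS.1⟩

end ADMG

section LinearSEM

variable {N : ℕ} {A Sg : Matrix (Fin N) (Fin N) ℝ}

noncomputable def deleteEdgesInto (A : Matrix (Fin N) (Fin N) ℝ) (Z : Set (Fin N)) :
    Matrix (Fin N) (Fin N) ℝ :=
  Matrix.of fun a b => if a ∈ Z then 0 else A a b

@[simp]
theorem deleteEdgesInto_apply (Z : Set (Fin N)) (a b : Fin N) :
    deleteEdgesInto A Z a b = if a ∈ Z then 0 else A a b := rfl

theorem deleteEdgesInto_eq_zero (hA : ∀ i j, i ≤ j → A i j = 0) (Z : Set (Fin N)) :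
    ∀ i j, i ≤ j → deleteEdgesInto A Z i j = 0 := by
  intro i j hij
  simp [hA i j hij]

theorem ctrlEffect_diff_singleton (hA : ∀ i j, i ≤ j → A i j = 0) (Z : Set (Fin N))
    (i k : Fin N) : ctrlEffect A (Z \ {k}) i k = ctrlEffect A Z i k :=
  Matrix.inv_one_sub_apply_eq_of_forall_ne (deleteEdgesInto_eq_zero hA _)
    (deleteEdgesInto_eq_zero hA _) (fun a hak => by ext b; simp [hak]) i

theorem reflTransGen_of_ctrlEffect_ne_zero (hA : ∀ i j, i ≤ j → A i j = 0) {Z : Set (Fin N)}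
    {a b : Fin N} (h : ctrlEffect A Z a b ≠ 0) :
    ReflTransGen (fun x y => A y x ≠ 0 ∧ y ∉ Z) b a := by
  refine ReflTransGen.mono (fun x y hxy => ?_) _ _
    (Matrix.reflTransGen_of_inv_one_sub_apply_ne_zero (deleteEdgesInto_eq_zero hA Z) h)
  by_cases hy : y ∈ Z <;> simp_all

/-- The intervened system: the equations of `S` become `X_k = X_k`, so the values of `X` on `S`
enter as exogenous inputs in place of the errors. -/
theorem eq_sum_ctrlEffect_mul (hA : ∀ i j, i ≤ j → A i j = 0) {x u : Fin N → ℝ}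
    (hx : x = A.mulVec x + u) (S : Set (Fin N)) (i : Fin N) :
    x i = ∑ l, ctrlEffect A S i l * (if l ∈ S then x l else u l) := by
  set M := deleteEdgesInto A S
  have hM : (1 - M).mulVec x = fun l => if l ∈ S then x l else u l := by
    ext l
    have hMx : M.mulVec x l = if l ∈ S then 0 else A.mulVec x l := by
      by_cases hl : l ∈ S <;> simp [M, Matrix.mulVec, dotProduct, hl]
    rw [Matrix.sub_mulVec, Matrix.one_mulVec, Pi.sub_apply, hMx]
    split_ifs
    · rw [sub_zero]
    · rw [congrFun hx l, Pi.add_apply, add_sub_cancel_left]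
  have hinv := Matrix.nonsing_inv_mul _ (Matrix.isUnit_det_one_sub (deleteEdgesInto_eq_zero hA S))
  calc x i = ((1 - M)⁻¹.mulVec ((1 - M).mulVec x)) i := by
        rw [Matrix.mulVec_mulVec, hinv, Matrix.one_mulVec]
    _ = _ := by rw [hM]; rfl

theorem residual_eq_sum_ctrlEffect_mul (hA : ∀ i j, i ≤ j → A i j = 0) {x u : Fin N → ℝ}
    (hx : x = A.mulVec x + u) (S : Set (Fin N)) (i : Fin N) :
    x i - ∑ k, (if k ∈ S then ctrlEffect A (S \ {k}) i k * x k else 0)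
      = ∑ l, (if l ∈ S then 0 else ctrlEffect A S i l) * u l := by
  have hsplit : ∀ l, ctrlEffect A S i l * (if l ∈ S then x l else u l)
      = (if l ∈ S then ctrlEffect A S i l * x l else 0)
        + (if l ∈ S then 0 else ctrlEffect A S i l) * u l := by
    intro l
    split_ifs <;> ring
  simp only [ctrlEffect_diff_singleton hA]
  rw [eq_sum_ctrlEffect_mul hA hx S i, Finset.sum_congr rfl fun l _ => hsplit l,
    Finset.sum_add_distrib, add_sub_cancel_left]

theorem diagram_dir_lt (hA : ∀ i j, i ≤ j → A i j = 0) (a b : Fin N)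
    (h : (diagram A Sg).dir a b) : a < b :=
  lt_of_not_ge fun hba => h (hA b a hba)

theorem errCov_eq_zero_of_ctrlEffect_ne_zero (hA : ∀ i j, i ≤ j → A i j = 0)
    {S S₂ : Set (Fin N)} {i q l m : Fin N}
    (hS₂ : S₂ ⊆ {t ∈ S | ∀ p : (diagram A Sg).GPath, p.IsBackdoor t i →
      ADMG.Blocks (S \ {t}) p})
    (hq : q ∈ S₂) (hl : l ∉ S \ S₂) (hm : m ∉ S)
    (hql : ctrlEffect A (S \ S₂) q l ≠ 0) (hmi : ctrlEffect A S i m ≠ 0) : Sg l m = 0 := by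
  by_contra hσ
  obtain ⟨t, ht, hlt⟩ := (reflTransGen_of_ctrlEffect_ne_zero hA hql).exists_first_mem hl hq
  rw [Set.sdiff_union_of_subset fun t ht => (hS₂ ht).1] at hlt
  have hlm : l = m ∨ (diagram A Sg).bidir l m := or_iff_not_imp_left.mpr fun h => ⟨h, hσ⟩
  obtain ⟨p, hp, hnb⟩ := ADMG.exists_isBackdoor_not_blocks (diagram_dir_lt hA) (hS₂ ht).1
    ⟨hm, reflTransGen_of_ctrlEffect_ne_zero hA hmi⟩ hlm hlt
  exact hnb ((hS₂ ht).2 p hp)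

end LinearSEM

theorem integral_mul_sub_mul_integral_eq_sum_covariance {Ω ι : Type*} [MeasurableSpace Ω]
    {μ : Measure Ω} [IsProbabilityMeasure μ] [Fintype ι] {u : Ω → ι → ℝ}
    (hu : ∀ l, MemLp (fun ω => u ω l) 2 μ) (v w : ι → ℝ) :
    (∫ ω, (∑ l, v l * u ω l) * (∑ m, w m * u ω m) ∂μ)
      - (∫ ω, ∑ l, v l * u ω l ∂μ) * (∫ ω, ∑ m, w m * u ω m ∂μ)
      = ∑ l, ∑ m, v l * w m * cov[fun ω => u ω l, fun ω => u ω m; μ] := by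
  have hcomb : ∀ c : ι → ℝ, MemLp (fun ω => ∑ l, c l * u ω l) 2 μ := fun c =>
    memLp_finsetSum _ fun l _ => (hu l).const_mul (c l)
  have h := covariance_eq_sub (hcomb v) (hcomb w)
  simp only [Pi.mul_apply] at h
  rw [← h, covariance_fun_sum_fun_sum (fun l => (hu l).const_mul (v l))
    fun m => (hu m).const_mul (w m)]
  simp only [covariance_const_mul_left, covariance_const_mul_right]
  exact Finset.sum_congr rfl fun _ _ => Finset.sum_congr rfl fun _ _ => by ring

theorem residualized_uncorrelated_general
    {Ω : Type*} [MeasurableSpace Ω] (μ : Measure Ω) [IsProbabilityMeasure μ]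
    {N : ℕ} (A Sg : Matrix (Fin N) (Fin N) ℝ)
    (hA : ∀ i j : Fin N, i ≤ j → A i j = 0)
    (u X : Ω → Fin N → ℝ)
    (hSEM : ∀ ω, X ω = A.mulVec (X ω) + u ω)
    (hu1 : ∀ i, Integrable (fun ω => u ω i) μ)
    (hu2 : ∀ i j, Integrable (fun ω => u ω i * u ω j) μ)
    (hcov : ∀ i j, ∫ ω, (u ω i - ∫ ω', u ω' i ∂μ) * (u ω j - ∫ ω', u ω' j ∂μ) ∂μ = Sg i j)
    (i : Fin N) (S : Set (Fin N))
    (S₁ S₂ : Set (Fin N))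
    (hS₂ : S₂ = {q ∈ S | ∀ p : (diagram A Sg).GPath, p.IsBackdoor q i →
      ADMG.Blocks (S \ {q}) p})
    (hS₁ : S₁ = S \ S₂)
    (q : Fin N) (hq : q ∈ S₂)
    (Xq Xi : Ω → ℝ)
    (hXq : Xq = fun ω => X ω q -
      ∑ p, if p ∈ S₁ then ctrlEffect A (S₁ \ {p}) q p * X ω p else 0)
    (hXi : Xi = fun ω => X ω i -
      ∑ k, if k ∈ S then ctrlEffect A (S \ {k}) i k * X ω k else 0) :
    (∫ ω, Xq ω * Xi ω ∂μ) - (∫ ω, Xq ω ∂μ) * (∫ ω, Xi ω ∂μ) = 0 := by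
  subst hS₁
  have hu : ∀ l, MemLp (fun ω => u ω l) 2 μ := fun l =>
    (memLp_two_iff_integrable_sq (hu1 l).aestronglyMeasurable).mpr (by simpa [sq] using hu2 l l)
  rw [hXq, hXi]
  simp only [residual_eq_sum_ctrlEffect_mul hA (hSEM _)]
  rw [integral_mul_sub_mul_integral_eq_sum_covariance hu]
  refine Finset.sum_eq_zero fun l _ => Finset.sum_eq_zero fun m _ => ?_
  rw [show cov[fun ω => u ω l, fun ω => u ω m; μ] = Sg l m from hcov l m]
  by_contra h
  simp only [mul_ne_zero_iff, ne_eq, ite_eq_left_iff, Classical.not_imp] at h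
  obtain ⟨⟨⟨hl, hql⟩, hm, hmi⟩, hσ⟩ := h
  exact hσ (errCov_eq_zero_of_ctrlEffect_ne_zero hA hS₂.subset hq hl hm hql hmi)

/-- for `q ∈ S₂` the residualized variables `X̃ q` and `X̃ i` are
uncorrelated. -/
theorem residualized_uncorrelated
    {Ω : Type*} [MeasurableSpace Ω] (μ : Measure Ω) [IsProbabilityMeasure μ]
    {N : ℕ} (A Sg : Matrix (Fin N) (Fin N) ℝ)
    (hA : ∀ i j : Fin N, i ≤ j → A i j = 0) (hSg : Sg.PosDef)
    (u X : Ω → Fin N → ℝ)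
    (hSEM : ∀ ω, X ω = A.mulVec (X ω) + u ω)
    (hu1 : ∀ i, Integrable (fun ω => u ω i) μ)
    (hu2 : ∀ i j, Integrable (fun ω => u ω i * u ω j) μ)
    (hcov : ∀ i j, ∫ ω, (u ω i - ∫ ω', u ω' i ∂μ) * (u ω j - ∫ ω', u ω' j ∂μ) ∂μ = Sg i j)
    (i : Fin N) (S : Set (Fin N)) (hiS : i ∉ S)
    (S₁ S₂ : Set (Fin N))
    (hS₂ : S₂ = {q ∈ S | ∀ p : (diagram A Sg).GPath, p.IsBackdoor q i →
      ADMG.Blocks (S \ {q}) p})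
    (hS₁ : S₁ = S \ S₂)
    (q : Fin N) (hq : q ∈ S₂)
    (Xq Xi : Ω → ℝ)
    (hXq : Xq = fun ω => X ω q -
      ∑ p, if p ∈ S₁ then ctrlEffect A (S₁ \ {p}) q p * X ω p else 0)
    (hXi : Xi = fun ω => X ω i -
      ∑ k, if k ∈ S then ctrlEffect A (S \ {k}) i k * X ω k else 0) :
    (∫ ω, Xq ω * Xi ω ∂μ) - (∫ ω, Xq ω ∂μ) * (∫ ω, Xi ω ∂μ) = 0 :=
  residualized_uncorrelated_general μ A Sg hA u X hSEM hu1 hu2 hcov i S S₁ S₂ hS₂ hS₁ q hq Xq Xi hXq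
    hXi
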